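/- There exists a joint distribution over binary X, Y₁, Y₂ and outcomes y₁, y₂ for which surprise fails to chain: I(y₁,y₂; X) ≠ I(y₁; X) + I(y₂; X | y₁). Concretely, with p(y₁)=1/2, p(x,y₂|y₁=0)=1/4 for all (x,y₂), p(x|y₂=0,y₁=1)=1/2 for both x, p(x=0|y₂=1,y₁=1)=1, and outcomes y₁=1, y₂=1, one has E_{p(x|y₁,y₂)}[I(y₁;x)] = log(2·√3·5^{1/4}/5) ≠ log(6/5) = I(y₁;X). -/

import Mathlib

/-!
Pointwise, the joint information splits exactly:
`log p(x,y₁,y₂)/(p(x)p(y₁,y₂)) = pmi(x;y₁) + log p(x,y₂|y₁)/(p(x|y₁)p(y₂|y₁))`.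
Averaging over `p(x|y₁,y₂)` therefore gives
`I(y₁,y₂;X) = E_{p(x|y₁,y₂)}[pmi(x;y₁)] + I(y₂;X|y₁)`, whereas `I(y₁;X)` averages the same
pointwise information over `p(x|y₁)`. The chain rule fails as soon as these two averages differ;
in the example `p(x|y₁,y₂)` is the point mass at `x = 0`, giving `log (6/5)`, while `p(x|y₁)`
also puts weight `1/4` on `x = 1`, where the pointwise information is `log (2/3) < log (6/5)`.
-/

open Real Finset

section Marginals

variable {α β γ : Type*} [Fintype α] [Fintype β] [Fintype γ] (p : α × β × γ → ℝ)

def margX (x : α) : ℝ := ∑ b, ∑ c, p (x, b, c)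

def margY₁ (b : β) : ℝ := ∑ x, ∑ c, p (x, b, c)

def margY₁Y₂ (b : β) (c : γ) : ℝ := ∑ x, p (x, b, c)

def margXY₁ (x : α) (b : β) : ℝ := ∑ c, p (x, b, c)

noncomputable def pmi (b : β) (x : α) : ℝ := log (margXY₁ p x b / (margX p x * margY₁ p b))

variable {p}

omit [Fintype α] [Fintype β] in
theorem le_margXY₁ (hp : ∀ z, 0 ≤ p z) (x : α) (b : β) (c : γ) : p (x, b, c) ≤ margXY₁ p x b :=
  single_le_sum (fun c _ => hp (x, b, c)) (mem_univ c)

omit [Fintype α] in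
theorem margXY₁_le_margX (hp : ∀ z, 0 ≤ p z) (x : α) (b : β) : margXY₁ p x b ≤ margX p x :=
  single_le_sum (f := fun b => ∑ c, p (x, b, c))
    (fun b _ => sum_nonneg fun c _ => hp (x, b, c)) (mem_univ b)

omit [Fintype β] in
theorem margY₁Y₂_le_margY₁ (hp : ∀ z, 0 ≤ p z) (b : β) (c : γ) : margY₁Y₂ p b c ≤ margY₁ p b :=
  sum_le_sum fun x _ => single_le_sum (fun c _ => hp (x, b, c)) (mem_univ c)

theorem log_joint_eq_pmi_add_log_cond (hp : ∀ z, 0 ≤ p z) {x : α} {b : β} {c : γ}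
    (hx : 0 < p (x, b, c)) :
    log (p (x, b, c) / (margX p x * margY₁Y₂ p b c)) =
      pmi p b x + log ((p (x, b, c) / margY₁ p b) /
        ((margXY₁ p x b / margY₁ p b) * (margY₁Y₂ p b c / margY₁ p b))) := by
  have hXY₁ := hx.trans_le (le_margXY₁ hp x b c)
  have hX := hXY₁.trans_le (margXY₁_le_margX hp x b)
  have hY₁Y₂ : 0 < margY₁Y₂ p b c :=
    hx.trans_le (single_le_sum (fun x _ => hp (x, b, c)) (mem_univ x))
  have hY₁ := hY₁Y₂.trans_le (margY₁Y₂_le_margY₁ hp b c)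
  rw [pmi, ← log_mul (by positivity) (by positivity)]
  congr 1
  field_simp

theorem joint_surprise_eq_avg_pmi_add_cond_surprise (hp : ∀ z, 0 ≤ p z) (b : β) (c : γ) :
    ∑ x, p (x, b, c) / margY₁Y₂ p b c * log (p (x, b, c) / (margX p x * margY₁Y₂ p b c)) =
      ∑ x, p (x, b, c) / margY₁Y₂ p b c * pmi p b x +
        ∑ x, p (x, b, c) / margY₁Y₂ p b c * log ((p (x, b, c) / margY₁ p b) /
          ((margXY₁ p x b / margY₁ p b) * (margY₁Y₂ p b c / margY₁ p b))) := by
  rw [← sum_add_distrib]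
  refine sum_congr rfl fun x _ => ?_
  rcases (hp (x, b, c)).eq_or_lt with hx | hx
  · simp [← hx]
  · rw [log_joint_eq_pmi_add_log_cond hp hx, mul_add]

end Marginals

noncomputable def nonchainingDist : Bool × Bool × Bool → ℝ
  | (_, false, _) => 1 / 8
  | (_, true, false) => 1 / 8
  | (false, true, true) => 1 / 4
  | (true, true, true) => 0

theorem nonchainingDist_nonneg (z : Bool × Bool × Bool) : 0 ≤ nonchainingDist z := by
  rcases z with ⟨_ | _, _ | _, _ | _⟩ <;> norm_num [nonchainingDist]

theorem pmi_nonchainingDist_false : pmi nonchainingDist true false = log (6 / 5) := by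
  norm_num [pmi, margXY₁, margX, margY₁, Fintype.sum_bool, nonchainingDist]

theorem pmi_nonchainingDist_true : pmi nonchainingDist true true = log (2 / 3) := by
  norm_num [pmi, margXY₁, margX, margY₁, Fintype.sum_bool, nonchainingDist]

theorem avg_pmi_nonchainingDist_ne :
    ∑ x, nonchainingDist (x, true, true) / margY₁Y₂ nonchainingDist true true *
        pmi nonchainingDist true x ≠
      ∑ x, margXY₁ nonchainingDist x true / margY₁ nonchainingDist true *
        pmi nonchainingDist true x := by
  have hlog : log (2 / 3) < log (6 / 5) := log_lt_log (by norm_num) (by norm_num)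
  norm_num [Fintype.sum_bool, margY₁Y₂, margXY₁, margY₁, nonchainingDist,
    pmi_nonchainingDist_false, pmi_nonchainingDist_true]
  linarith

/-- Surprise fails to chain over observed outcomes: there is a joint distribution over
binary `X, Y₁, Y₂` and outcomes `y₁, y₂` with
`I(y₁,y₂; X) ≠ I(y₁; X) + I(y₂; X | y₁)`.  Concretely, one can take a distribution with
`p(y₁=0) = 1/2`, `p(x, y₂ | y₁=0) = 1/4`, `p(x | y₂=0, y₁=1) = 1/2`,
`p(x=0 | y₂=1, y₁=1) = 1`, and the outcomes `y₁ = 1`, `y₂ = 1`. -/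
theorem surprise_does_not_chain :
    ∃ p : Bool × Bool × Bool → ℝ, ∃ y₁ y₂ : Bool,
      (∀ z, 0 ≤ p z) ∧ (∑ z, p z = 1) ∧ (0 < ∑ x, p (x, y₁, y₂)) ∧
      y₁ = true ∧ y₂ = true ∧
      -- p(y₁ = 0) = 1/2
      (∑ x, ∑ y₂', p (x, false, y₂')) = 1 / 2 ∧
      -- p(x, y₂ | y₁ = 0) = 1/4 for all (x, y₂)
      (∀ x y₂', p (x, false, y₂') / (∑ x', ∑ y₂'', p (x', false, y₂'')) = 1 / 4) ∧
      -- p(x | y₂ = 0, y₁ = 1) = 1/2 for both x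
      (∀ x, p (x, true, false) / (∑ x', p (x', true, false)) = 1 / 2) ∧
      -- p(x = 0 | y₂ = 1, y₁ = 1) = 1
      p (false, true, true) / (∑ x', p (x', true, true)) = 1 ∧
      (let pX := fun x => ∑ y₁', ∑ y₂', p (x, y₁', y₂')
       let pY₁ := ∑ x, ∑ y₂', p (x, y₁, y₂')
       let pY₁Y₂ := ∑ x, p (x, y₁, y₂)
       let pXY₁ := fun x => ∑ y₂', p (x, y₁, y₂')
       let pXgY₁ := fun x => pXY₁ x / pY₁
       let pXgY₁Y₂ := fun x => p (x, y₁, y₂) / pY₁Y₂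
       -- I(y₁, y₂; X)
       let I12 := ∑ x, pXgY₁Y₂ x * Real.log (p (x, y₁, y₂) / (pX x * pY₁Y₂))
       -- I(y₁; X)
       let I1 := ∑ x, pXgY₁ x * Real.log (pXY₁ x / (pX x * pY₁))
       -- I(y₂; X | y₁)
       let I2g1 := ∑ x, pXgY₁Y₂ x *
         Real.log ((p (x, y₁, y₂) / pY₁) / (pXgY₁ x * (pY₁Y₂ / pY₁)))
       I12 ≠ I1 + I2g1) := by
  refine ⟨nonchainingDist, true, true, nonchainingDist_nonneg, ?_, ?_, rfl, rfl, ?_, ?_, ?_, ?_,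
    ?_⟩
  rotate_right
  · intro _ _ _ _ _ _ I12 I1 I2g1 hchain
    have hsplit : I12 = _ + I2g1 :=
      joint_surprise_eq_avg_pmi_add_cond_surprise nonchainingDist_nonneg true true
    exact avg_pmi_nonchainingDist_ne (add_right_cancel (hsplit.symm.trans hchain))
  all_goals simp only [Fintype.sum_prod_type, Fintype.sum_bool]
  · norm_num [nonchainingDist]
  · norm_num [nonchainingDist]
  · norm_num [nonchainingDist]
  · rintro (_ | _) (_ | _) <;> norm_num [nonchainingDist]
  · rintro (_ | _) <;> norm_num [nonchainingDist]
  · norm_num [nonchainingDist]
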